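/- arXiv:2301.10632 — 4 statements merged into one kernel-verified Lean document; each statement's English description precedes it below -/
import Mathlib

section
/- Let v be a monotone valuation, and suppose agent a with bundle X envies bundle Y (i.e., v(X) < v(Y)) where Y is a finite nonempty set. Then there exists a minimally envied subset S ⊆ Y: v(X) < v(S) and v(X) ≥ v(S \ {h}) for every h ∈ S. -/
theorem stmt_4 {G : Type*} [DecidableEq G] (v : Finset G → ℝ)
    (hmono : Monotone v) (h0 : v ∅ = 0)
    (X Y : Finset G) (hne : Y.Nonempty) (henvy : v X < v Y) :
    ∃ S ⊆ Y, v X < v S ∧ ∀ h ∈ S, v (S.erase h) ≤ v X := by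
  classical
  have hP : ∃ S ∈ Y.powerset.filter (fun S => v X < v S), True := by
    exact ⟨Y, by simp [henvy], trivial⟩
  obtain ⟨S, hS, hmin⟩ := Finset.exists_min_image
    (Y.powerset.filter (fun S => v X < v S)) Finset.card ⟨Y, by simp [henvy]⟩
  simp only [Finset.mem_filter, Finset.mem_powerset] at hS
  refine ⟨S, hS.1, hS.2, fun h hh => ?_⟩
  by_contra hlt
  push_neg at hlt
  have := hmin (S.erase h) (by
    simp only [Finset.mem_filter, Finset.mem_powerset]
    exact ⟨(Finset.erase_subset _ _).trans hS.1, hlt⟩)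
  have hc : (S.erase h).card < S.card := Finset.card_erase_lt_of_mem hh
  omega
end

section
/- Let v_c be an MMS-feasible valuation and suppose bundle X_n satisfies v_c(X_n \ {g_c}) > v_c(X_j) for all j ≤ n−1, where g_c ∈ X_n, and v_c(X_n \ {g_c}) < v_c(X_1 ∪ {g_c}). If (Y_1, Y_2) is any 2-partition of X_1 ∪ X_n, then max(v_c(Y_1), v_c(Y_2)) ≥ v_c(X_n \ {g_c}) > v_c(X_j) for all 2 ≤ j ≤ n−1. -/
/-- MMS-feasible valuation. -/
def MMSFeasible {G : Type*} [DecidableEq G] (v : Finset G → ℝ) : Prop :=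
  ∀ A₁ A₂ B₁ B₂ : Finset G, Disjoint A₁ A₂ → Disjoint B₁ B₂ →
    A₁ ∪ A₂ = B₁ ∪ B₂ → min (v A₁) (v A₂) ≤ max (v B₁) (v B₂)

theorem stmt_7 {G : Type*} [DecidableEq G] {n : ℕ} (hn : 2 ≤ n)
    (vc : Finset G → ℝ) (hmms : MMSFeasible vc)
    (X : Fin (n+1) → Finset G)
    (hdisj : ∀ i j, i ≠ j → Disjoint (X i) (X j))
    (g_c : G) (hg : g_c ∈ X (Fin.last n))
    (h1 : ∀ j : Fin (n+1), j ≠ Fin.last n →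
      vc (X j) < vc ((X (Fin.last n)).erase g_c))
    (h2 : vc ((X (Fin.last n)).erase g_c) < vc (X 0 ∪ {g_c}))
    (Y₁ Y₂ : Finset G) (hYd : Disjoint Y₁ Y₂)
    (hYu : Y₁ ∪ Y₂ = X 0 ∪ X (Fin.last n)) :
    vc ((X (Fin.last n)).erase g_c) ≤ max (vc Y₁) (vc Y₂) ∧
    ∀ j : Fin (n+1), j ≠ 0 → j ≠ Fin.last n →
      vc (X j) < max (vc Y₁) (vc Y₂) := by
  have h0ne : (0 : Fin (n+1)) ≠ Fin.last n := by
    have : (0:ℕ) ≠ n := by omega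
    simp [Fin.ext_iff, Fin.last]; omega
  have hdA : Disjoint (X 0 ∪ {g_c}) ((X (Fin.last n)).erase g_c) := by
    rw [Finset.disjoint_union_left]
    constructor
    · exact (hdisj 0 (Fin.last n) h0ne).mono_right (Finset.erase_subset _ _)
    · simp [Finset.disjoint_left]
  have hU : (X 0 ∪ {g_c}) ∪ (X (Fin.last n)).erase g_c = X 0 ∪ X (Fin.last n) := by
    rw [Finset.union_assoc]
    congr 1
    simpa using Finset.insert_erase hg
  have key := hmms (X 0 ∪ {g_c}) ((X (Fin.last n)).erase g_c) Y₁ Y₂ hdA hYd (hU.trans hYu.symm)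
  have hmin : min (vc (X 0 ∪ {g_c})) (vc ((X (Fin.last n)).erase g_c))
      = vc ((X (Fin.last n)).erase g_c) := min_eq_right h2.le
  rw [hmin] at key
  refine ⟨key, fun j hj0 hjl => lt_of_lt_of_le (h1 j hjl) key⟩
end

section
/- Let n ≥ 2 agents have identical monotone valuation v on a finite set of goods G. Then there exists an EFX allocation (X_1,...,X_n) of G; moreover, it can be chosen so that min_i v(X_i) ≥ min_i v(Y_i) for any prescribed starting n-partition Y of G. -/
open Finset

open Classical in
private noncomputable def prRank {G : Type*} [DecidableEq G] [Fintype G]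
    (v : Finset G → ℝ) (S : Finset G) : ℕ :=
  ((Finset.univ.image v).filter (fun y => y ≤ v S)).card

open Classical in
private lemma prRank_mono {G : Type*} [DecidableEq G] [Fintype G]
    (v : Finset G → ℝ) {S T : Finset G} (h : v S ≤ v T) : prRank v S ≤ prRank v T := by
  classical
  apply Finset.card_le_card
  intro x hx
  simp only [Finset.mem_filter] at hx ⊢
  exact ⟨hx.1, le_trans hx.2 h⟩

open Classical in
private lemma prRank_strict {G : Type*} [DecidableEq G] [Fintype G]
    (v : Finset G → ℝ) {S T : Finset G} (h : v S < v T) : prRank v S < prRank v T := by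
  classical
  apply Finset.card_lt_card
  rw [Finset.ssubset_iff_of_subset]
  · refine ⟨v T, ?_, ?_⟩
    · simp only [Finset.mem_filter, Finset.mem_image]
      exact ⟨⟨T, Finset.mem_univ T, rfl⟩, le_rfl⟩
    · simp only [Finset.mem_filter, not_and, not_le]
      intro _; exact h
  · intro x hx
    simp only [Finset.mem_filter] at hx ⊢
    exact ⟨hx.1, hx.2.trans h.le⟩

private noncomputable def prCode {G : Type*} [DecidableEq G] [Fintype G]
    (v : Finset G → ℝ) (S : Finset G) : ℕ :=
  prRank v S * (Fintype.card G + 1) + S.card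

private noncomputable def prVB {G : Type*} [DecidableEq G] [Fintype G]
    (v : Finset G → ℝ) : ℕ :=
  (Finset.univ.image v).card * (Fintype.card G + 1) + Fintype.card G

private lemma prCode_le {G : Type*} [DecidableEq G] [Fintype G]
    (v : Finset G → ℝ) (S : Finset G) : prCode v S ≤ prVB v := by
  classical
  have h1 : prRank v S ≤ (Finset.univ.image v).card := Finset.card_filter_le _ _
  have h2 : S.card ≤ Fintype.card G := Finset.card_le_univ S
  exact Nat.add_le_add (Nat.mul_le_mul_right _ h1) h2

private lemma pr_aux {G : Type*} [DecidableEq G] [Fintype G] {m : ℕ}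
    (v : Finset G → ℝ) (hmono : Monotone v) :
    ∀ (N : ℕ) (X : Fin (m+2) → Finset G),
      (∀ i j, i ≠ j → Disjoint (X i) (X j)) →
      Finset.univ.biUnion X = Finset.univ →
      (∑ k, 3 ^ (prVB v - prCode v (X k))) ≤ N →
      ∃ X' : Fin (m+2) → Finset G,
        (∀ i j, i ≠ j → Disjoint (X' i) (X' j)) ∧
        Finset.univ.biUnion X' = Finset.univ ∧
        (∀ i j : Fin (m+2), ∀ g ∈ X' j, v ((X' j).erase g) ≤ v (X' i)) ∧
        Finset.univ.inf' Finset.univ_nonempty (fun i => v (X i)) ≤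
          Finset.univ.inf' Finset.univ_nonempty (fun i => v (X' i)) := by
  classical
  intro N
  induction N with
  | zero =>
    intro X _ _ hμ
    exfalso
    have hpos : 0 < ∑ k : Fin (m+2), 3 ^ (prVB v - prCode v (X k)) :=
      Finset.sum_pos (fun k _ => pow_pos (by norm_num) _) Finset.univ_nonempty
    omega
  | succ N ih =>
    intro X hd hu hμ
    by_cases hefx : ∀ i j : Fin (m+2), ∀ g ∈ X j, v ((X j).erase g) ≤ v (X i)
    · exact ⟨X, hd, hu, hefx, le_rfl⟩
    push_neg at hefx
    obtain ⟨i, j, g, hgj, h⟩ := hefx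
    have hij : i ≠ j := by
      rintro rfl
      exact absurd (hmono (Finset.erase_subset g (X i))) (not_le.mpr h)
    have hgi : g ∉ X i := Finset.disjoint_right.mp (hd i j hij) hgj
    set A : Finset G := insert g (X i) with hA
    set B : Finset G := (X j).erase g with hB
    set X₁ : Fin (m+2) → Finset G :=
      Function.update (Function.update X i A) j B with hX₁
    have hX1j : X₁ j = B := by simp [hX₁]
    have hX1i : X₁ i = A := by
      simp [hX₁, Function.update_of_ne hij]
    have hX1k : ∀ k, k ≠ i → k ≠ j → X₁ k = X k := by
      intro k hki hkj
      simp [hX₁, Function.update_of_ne hkj, Function.update_of_ne hki]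
    -- disjointness
    have dAB : Disjoint A B := by
      rw [hA, Finset.disjoint_insert_left]
      exact ⟨Finset.notMem_erase g _,
        Disjoint.mono_right (Finset.erase_subset _ _) (hd i j hij)⟩
    have dAk : ∀ k, k ≠ i → k ≠ j → Disjoint A (X k) := by
      intro k hki hkj
      rw [hA, Finset.disjoint_insert_left]
      exact ⟨Finset.disjoint_left.mp (hd j k (Ne.symm hkj)) hgj, hd i k (Ne.symm hki)⟩
    have dBk : ∀ k, k ≠ i → k ≠ j → Disjoint B (X k) := by
      intro k hki hkj
      exact Disjoint.mono_left (Finset.erase_subset _ _) (hd j k (Ne.symm hkj))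
    have hd1 : ∀ k l, k ≠ l → Disjoint (X₁ k) (X₁ l) := by
      intro k l hkl
      by_cases hki : k = i
      · subst hki
        rw [hX1i]
        by_cases hlj : l = j
        · subst hlj; rw [hX1j]; exact dAB
        · rw [hX1k l (Ne.symm hkl) hlj]; exact dAk l (Ne.symm hkl) hlj
      by_cases hkj : k = j
      · subst hkj
        rw [hX1j]
        by_cases hli : l = i
        · subst hli; rw [hX1i]; exact dAB.symm
        · rw [hX1k l hli (Ne.symm hkl)]; exact dBk l hli (Ne.symm hkl)
      rw [hX1k k hki hkj]
      by_cases hli : l = i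
      · subst hli; rw [hX1i]; exact (dAk k hki hkj).symm
      by_cases hlj : l = j
      · subst hlj; rw [hX1j]; exact (dBk k hki hkj).symm
      · rw [hX1k l hli hlj]; exact hd k l hkl
    -- cover
    have hu1 : Finset.univ.biUnion X₁ = Finset.univ := by
      rw [Finset.eq_univ_iff_forall]
      intro x
      rw [Finset.mem_biUnion]
      have hx : x ∈ Finset.univ.biUnion X := hu ▸ Finset.mem_univ x
      rw [Finset.mem_biUnion] at hx
      obtain ⟨k, -, hk⟩ := hx
      by_cases hkj : k = j
      · subst hkj
        by_cases hxg : x = g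
        · exact ⟨i, Finset.mem_univ i, by rw [hX1i, hA, hxg]; exact Finset.mem_insert_self g _⟩
        · exact ⟨k, Finset.mem_univ k, by rw [hX1j, hB]; exact Finset.mem_erase.mpr ⟨hxg, hk⟩⟩
      by_cases hki : k = i
      · subst hki
        exact ⟨k, Finset.mem_univ k, by rw [hX1i, hA]; exact Finset.mem_insert_of_mem hk⟩
      · exact ⟨k, Finset.mem_univ k, by rw [hX1k k hki hkj]; exact hk⟩
    -- code inequalities
    have ha' : prCode v (X i) < prCode v A := by
      have h1 : prRank v (X i) ≤ prRank v A :=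
        prRank_mono v (hmono (Finset.subset_insert g (X i)))
      have h2 : A.card = (X i).card + 1 := Finset.card_insert_of_notMem hgi
      have h3 : prRank v (X i) * (Fintype.card G + 1) ≤ prRank v A * (Fintype.card G + 1) :=
        Nat.mul_le_mul_right _ h1
      calc prCode v (X i) = prRank v (X i) * (Fintype.card G + 1) + (X i).card := rfl
        _ < prRank v (X i) * (Fintype.card G + 1) + ((X i).card + 1) := by omega
        _ ≤ prRank v A * (Fintype.card G + 1) + A.card := by rw [h2]; exact Nat.add_le_add_right h3 _
        _ = prCode v A := rfl
    have hb' : prCode v (X i) < prCode v B := by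
      have h1 : prRank v (X i) < prRank v B := prRank_strict v h
      have h2 : (X i).card ≤ Fintype.card G := Finset.card_le_univ _
      calc prCode v (X i) = prRank v (X i) * (Fintype.card G + 1) + (X i).card := rfl
        _ < prRank v (X i) * (Fintype.card G + 1) + (Fintype.card G + 1) := by omega
        _ = (prRank v (X i) + 1) * (Fintype.card G + 1) := by ring
        _ ≤ prRank v B * (Fintype.card G + 1) := Nat.mul_le_mul_right _ h1
        _ ≤ prCode v B := Nat.le_add_right _ _
    have hAle : prCode v A ≤ prVB v := prCode_le v A
    have hBle : prCode v B ≤ prVB v := prCode_le v B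
    have hale : prCode v (X i) ≤ prVB v := prCode_le v (X i)
    have key : 3 ^ (prVB v - prCode v A) + 3 ^ (prVB v - prCode v B)
        < 3 ^ (prVB v - prCode v (X i)) + 3 ^ (prVB v - prCode v (X j)) := by
      have e1 : (3:ℕ) ^ (prVB v - prCode v A) ≤ 3 ^ (prVB v - prCode v (X i) - 1) :=
        Nat.pow_le_pow_right (by norm_num) (by omega)
      have e2 : (3:ℕ) ^ (prVB v - prCode v B) ≤ 3 ^ (prVB v - prCode v (X i) - 1) :=
        Nat.pow_le_pow_right (by norm_num) (by omega)
      have e3 : (3:ℕ) ^ (prVB v - prCode v (X i)) = 3 * 3 ^ (prVB v - prCode v (X i) - 1) := by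
        rw [← pow_succ']
        congr 1
        omega
      have e4 : 0 < (3:ℕ) ^ (prVB v - prCode v (X i) - 1) := pow_pos (by norm_num) _
      have e5 : 0 < (3:ℕ) ^ (prVB v - prCode v (X j)) := pow_pos (by norm_num) _
      omega
    -- sum decrease
    have hμ1 : ∑ k, 3 ^ (prVB v - prCode v (X₁ k)) < ∑ k, 3 ^ (prVB v - prCode v (X k)) := by
      have hji : j ∈ (Finset.univ : Finset (Fin (m+2))).erase i :=
        Finset.mem_erase.mpr ⟨Ne.symm hij, Finset.mem_univ j⟩
      rw [← Finset.add_sum_erase _ (fun k => 3 ^ (prVB v - prCode v (X₁ k))) (Finset.mem_univ i),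
          ← Finset.add_sum_erase _ (fun k => 3 ^ (prVB v - prCode v (X₁ k))) hji,
          ← Finset.add_sum_erase _ (fun k => 3 ^ (prVB v - prCode v (X k))) (Finset.mem_univ i),
          ← Finset.add_sum_erase _ (fun k => 3 ^ (prVB v - prCode v (X k))) hji]
      have hrest : ∑ k ∈ (Finset.univ.erase i).erase j, 3 ^ (prVB v - prCode v (X₁ k))
          = ∑ k ∈ (Finset.univ.erase i).erase j, 3 ^ (prVB v - prCode v (X k)) := by
        apply Finset.sum_congr rfl
        intro k hk
        have hkj : k ≠ j := (Finset.mem_erase.mp hk).1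
        have hki : k ≠ i := (Finset.mem_erase.mp (Finset.mem_erase.mp hk).2).1
        rw [hX1k k hki hkj]
      rw [hrest, hX1i, hX1j]
      omega
    -- min preservation
    have hinf : Finset.univ.inf' Finset.univ_nonempty (fun k => v (X k)) ≤
        Finset.univ.inf' Finset.univ_nonempty (fun k => v (X₁ k)) := by
      apply Finset.le_inf'
      intro k _
      by_cases hkj : k = j
      · subst hkj
        rw [hX1j]
        exact le_trans (Finset.inf'_le _ (Finset.mem_univ i)) h.le
      by_cases hki : k = i
      · subst hki
        rw [hX1i]
        exact le_trans (Finset.inf'_le _ (Finset.mem_univ k))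
          (hmono (Finset.subset_insert g (X k)))
      · rw [hX1k k hki hkj]
        exact Finset.inf'_le _ (Finset.mem_univ k)
    obtain ⟨X', hd', hu', hefx', hinf'⟩ := ih X₁ hd1 hu1 (by omega)
    exact ⟨X', hd', hu', hefx', le_trans hinf hinf'⟩

theorem stmt_11 {G : Type*} [DecidableEq G] [Fintype G] {m : ℕ}
    (v : Finset G → ℝ) (hmono : Monotone v)
    (Y : Fin (m+2) → Finset G)
    (hYd : ∀ i j, i ≠ j → Disjoint (Y i) (Y j))
    (hYu : Finset.univ.biUnion Y = Finset.univ) :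
    ∃ X : Fin (m+2) → Finset G,
      (∀ i j, i ≠ j → Disjoint (X i) (X j)) ∧
      Finset.univ.biUnion X = Finset.univ ∧
      (∀ i j : Fin (m+2), ∀ g ∈ X j, v ((X j).erase g) ≤ v (X i)) ∧
      Finset.univ.inf' Finset.univ_nonempty (fun i => v (Y i)) ≤
        Finset.univ.inf' Finset.univ_nonempty (fun i => v (X i)) := by
  exact pr_aux v hmono (∑ k, 3 ^ (prVB v - prCode v (Y k))) Y hYd hYu le_rfl
end

section
/- For 4 agents with at most 3 distinct additive valuations (each good positively valued) on a finite set of goods, an EFX allocation exists, given that EFX allocations exist whenever n−2 of n agents have identical valuations (with the other two valuations monotone/MMS-feasible). -/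
lemma fin4_compl : ∀ i j : Fin 4, i ≠ j → ∃ a b : Fin 4, a ≠ b ∧
    ∀ k : Fin 4, k ≠ a → k ≠ b → k = i ∨ k = j := by decide

theorem stmt_18 {G : Type*} [DecidableEq G] [Fintype G]
    -- main theorem, assumed: EFX allocations exist whenever n−2 of n agents
    -- have identical valuations, the valuations being monotone and MMS-feasible
    (hMain : ∀ (n : ℕ) (V : Fin n → Finset G → ℝ),
      (∀ i, Monotone (V i)) → (∀ i, MMSFeasible (V i)) →
      (∃ i j : Fin n, i ≠ j ∧
        ∀ k l : Fin n, k ≠ i → k ≠ j → l ≠ i → l ≠ j → V k = V l) →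
      ∃ X : Fin n → Finset G,
        (∀ i j, i ≠ j → Disjoint (X i) (X j)) ∧
        Finset.univ.biUnion X = Finset.univ ∧
        (∀ i j : Fin n, ∀ g ∈ X j, V i ((X j).erase g) ≤ V i (X i)))
    -- four agents with additive, positively-valued valuations
    (v : Fin 4 → Finset G → ℝ)
    (hadd : ∀ i, ∀ S : Finset G, v i S = ∑ g ∈ S, v i {g})
    (hpos : ∀ i, ∀ g : G, 0 < v i {g})
    -- at most 3 distinct valuations among the 4 agents
    (hdist : ∃ i j : Fin 4, i ≠ j ∧ v i = v j) :
    ∃ X : Fin 4 → Finset G,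
      (∀ i j, i ≠ j → Disjoint (X i) (X j)) ∧
      Finset.univ.biUnion X = Finset.univ ∧
      (∀ i j : Fin 4, ∀ g ∈ X j, v i ((X j).erase g) ≤ v i (X i)) := by
  obtain ⟨i, j, hij, hv⟩ := hdist
  obtain ⟨a, b, hab, hcov⟩ := fin4_compl i j hij
  have hmono : ∀ i : Fin 4, Monotone (v i) := by
    intro i S T hST
    rw [hadd i S, hadd i T]
    exact Finset.sum_le_sum_of_subset_of_nonneg hST
      (fun g _ _ => (hpos i g).le)
  have hunion : ∀ i : Fin 4, ∀ A B : Finset G, Disjoint A B →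
      v i (A ∪ B) = v i A + v i B := by
    intro i A B hAB
    rw [hadd i (A ∪ B), hadd i A, hadd i B, Finset.sum_union hAB]
  have hmms : ∀ i : Fin 4, MMSFeasible (v i) := by
    intro i A₁ A₂ B₁ B₂ hA hB hE
    have h1 : v i A₁ + v i A₂ = v i B₁ + v i B₂ := by
      rw [← hunion i A₁ A₂ hA, ← hunion i B₁ B₂ hB, hE]
    have h2 := min_le_left (v i A₁) (v i A₂)
    have h3 := min_le_right (v i A₁) (v i A₂)
    have h4 := le_max_left (v i B₁) (v i B₂)
    have h5 := le_max_right (v i B₁) (v i B₂)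
    linarith
  exact hMain 4 v hmono hmms ⟨a, b, hab, fun k l hka hkb hla hlb => by
    rcases hcov k hka hkb with hk | hk <;> rcases hcov l hla hlb with hl | hl <;>
      subst hk <;> subst hl <;> first | rfl | exact hv | exact hv.symm⟩
end
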